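/- arXiv:2201.08651 — 2 statements merged into one kernel-verified Lean document; each statement's English description precedes it below -/
import Mathlib

section
/- For every j ≥ 1, the multilinear operator J_j satisfies the norm bound ‖J_j‖ ≤ ν (μ + ν)^{j−1}. -/
/-!
Each composition term is bounded by submultiplicativity of the norm:
`‖Ǩ_{i₁}(…) ⋯ Ǩ_{iₘ}(…)‖ ≤ ν^m μ^(j-m) ∏ ‖fᵢ‖`. After discarding the factors `1/m ≤ 1`
it remains to sum `ν^m μ^(j-m)` over all compositions of `j`. A composition with `m` blocks
is the same as a set of `m - 1` cut points among the `j - 1` inner positions, so this sum is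
`ν ∑ₛ ν^|s| μ^(j-1-|s|) = ν (μ + ν)^(j-1)` by the binomial theorem.
-/

open Finset

theorem CompositionAsSet.card_boundaries_compositionAsSetEquiv_symm {n : ℕ} (hn : 1 ≤ n)
    (s : Finset (Fin (n - 1))) :
    ((compositionAsSetEquiv n).symm s).boundaries.card = #s + 2 := by
  let shift : Fin (n - 1) ↪ Fin (n + 1) :=
    ⟨fun i => ⟨i + 1, by omega⟩, fun i j h => Fin.ext (by simpa using congrArg Fin.val h)⟩
  have hshift (i : Fin (n - 1)) : (shift i : ℕ) = i + 1 := rfl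
  have hboundaries : ((compositionAsSetEquiv n).symm s).boundaries =
      insert 0 (insert (Fin.last n) (s.map shift)) := by
    ext x
    simp only [compositionAsSetEquiv, Equiv.coe_fn_symm_mk, Set.mem_toFinset, Set.mem_ofPred_eq,
      mem_insert, mem_map, Fin.ext_iff (b := x), hshift, exists_prop, eq_comm]
  have h0 : (0 : Fin (n + 1)) ∉ insert (Fin.last n) (s.map shift) := by
    simp only [mem_insert, mem_map, Fin.ext_iff, hshift, Fin.val_last, Fin.val_zero, not_or,
      not_exists, not_and]
    exact ⟨by omega, fun _ _ => by omega⟩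
  have hlast : Fin.last n ∉ s.map shift := by
    simp only [mem_map, not_exists, not_and, Fin.ext_iff, hshift, Fin.val_last]
    omega
  rw [hboundaries, card_insert_of_notMem h0, card_insert_of_notMem hlast, card_map]

theorem CompositionAsSet.length_compositionAsSetEquiv_symm {n : ℕ} (hn : 1 ≤ n)
    (s : Finset (Fin (n - 1))) :
    ((compositionAsSetEquiv n).symm s).length = #s + 1 := by
  have h := ((compositionAsSetEquiv n).symm s).card_boundaries_eq_succ_length
  rw [card_boundaries_compositionAsSetEquiv_symm hn] at h
  omega

theorem Composition.sum_pow_length_mul_pow {R : Type*} [CommSemiring R] {n : ℕ} (hn : 1 ≤ n)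
    (a b : R) :
    ∑ c : Composition n, a ^ c.length * b ^ (n - c.length) = a * (a + b) ^ (n - 1) := by
  rw [← Fin.sum_pow_mul_eq_add_pow, mul_sum]
  refine Fintype.sum_equiv ((compositionEquiv n).trans (compositionAsSetEquiv n)) _ _ fun c => ?_
  set s := compositionAsSetEquiv n c.toCompositionAsSet
  have hlength : c.length = #s + 1 := by
    rw [← c.toCompositionAsSet_length, ← CompositionAsSet.length_compositionAsSetEquiv_symm hn,
      Equiv.symm_apply_apply]
  rw [hlength, pow_succ', mul_assoc, Nat.sub_add_eq, Nat.sub_right_comm]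
  rfl

theorem Composition.prod_mul_pow_blocksFun_sub_one {M : Type*} [CommMonoid M] {n : ℕ}
    (c : Composition n) (a b : M) :
    ∏ k, a * b ^ (c.blocksFun k - 1) = a ^ c.length * b ^ (n - c.length) := by
  rw [prod_mul_distrib, prod_const, card_univ, Fintype.card_fin, prod_pow_eq_pow_sum,
    sum_tsub_distrib _ fun k _ => c.one_le_blocksFun k, c.sum_blocksFun]
  simp

theorem Composition.norm_prod_apply_embedding_le {𝕜 X Y : Type*} [NontriviallyNormedField 𝕜]
    [SeminormedAddCommGroup X] [NormedSpace 𝕜 X] [NormedCommRing Y] [NormedSpace 𝕜 Y]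
    (K : ∀ j : ℕ, ContinuousMultilinearMap 𝕜 (fun _ : Fin j => X) Y) {n : ℕ} (hn : 0 < n)
    (c : Composition n) (f : Fin n → X) :
    ‖∏ k, K (c.blocksFun k) (fun i => f (c.embedding k i))‖ ≤
      (∏ k, ‖K (c.blocksFun k)‖) * ∏ i, ‖f i‖ := by
  have : Nonempty (Fin c.length) := ⟨⟨0, c.length_pos_of_pos hn⟩⟩
  calc ‖∏ k, K (c.blocksFun k) (fun i => f (c.embedding k i))‖
      ≤ ∏ k, ‖K (c.blocksFun k) (fun i => f (c.embedding k i))‖ :=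
        norm_prod_le' _ univ_nonempty _
    _ ≤ ∏ k, ‖K (c.blocksFun k)‖ * ∏ i, ‖f (c.embedding k i)‖ :=
        prod_le_prod (fun _ _ => norm_nonneg _) fun k _ => (K _).le_opNorm _
    _ = (∏ k, ‖K (c.blocksFun k)‖) * ∏ i, ‖f i‖ := by
        rw [prod_mul_distrib, c.prod_prod_apply_embedding fun i => ‖f i‖]

theorem stmt5_general {X Y : Type*}
    [NormedAddCommGroup X] [NormedSpace ℝ X]
    [NormedCommRing Y] [NormedAlgebra ℝ Y]
    (μ ν : ℝ) (hμ : 0 ≤ μ) (hν : 0 ≤ ν)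
    (K : ∀ j : ℕ, ContinuousMultilinearMap ℝ (fun _ : Fin j => X) Y)
    (hK : ∀ j : ℕ, 1 ≤ j → ‖K j‖ ≤ ν * μ ^ (j - 1))
    (J : ∀ j : ℕ, ContinuousMultilinearMap ℝ (fun _ : Fin j => X) Y)
    (hJ : ∀ (j : ℕ) (f : Fin j → X), J j f =
      ∑ m ∈ Finset.Icc 1 j, (m : ℝ)⁻¹ •
        ∑ c ∈ Finset.univ.filter (fun c : Composition j => c.length = m),
          ∏ k : Fin c.length, K (c.blocksFun k) (fun i => f (c.embedding k i)))
    (j : ℕ) (hj : 1 ≤ j) :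
    ‖J j‖ ≤ ν * (μ + ν) ^ (j - 1) := by
  refine ContinuousMultilinearMap.opNorm_le_bound (by positivity) fun f => ?_
  have hterm (c : Composition j) :
      ‖∏ k, K (c.blocksFun k) (fun i => f (c.embedding k i))‖ ≤
        ν ^ c.length * μ ^ (j - c.length) * ∏ i, ‖f i‖ := by
    refine (c.norm_prod_apply_embedding_le K hj f).trans (mul_le_mul_of_nonneg_right ?_ ?_)
    · rw [← c.prod_mul_pow_blocksFun_sub_one]
      exact prod_le_prod (fun _ _ => norm_nonneg _) fun k _ => hK _ (c.one_le_blocksFun k)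
    · exact prod_nonneg fun _ _ => norm_nonneg _
  calc ‖J j f‖
      ≤ ∑ m ∈ Icc 1 j, ∑ c ∈ univ.filter (fun c : Composition j => c.length = m),
          ν ^ c.length * μ ^ (j - c.length) * ∏ i, ‖f i‖ := by
        rw [hJ]
        refine (norm_sum_le _ _).trans (sum_le_sum fun m hm => ?_)
        have hm : (1 : ℝ) ≤ m := by exact_mod_cast (mem_Icc.1 hm).1
        rw [norm_smul, norm_inv, Real.norm_natCast]
        exact (mul_le_of_le_one_left (norm_nonneg _) (inv_le_one_of_one_le₀ hm)).trans
          ((norm_sum_le _ _).trans (sum_le_sum fun c _ => hterm c))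
    _ = (∑ c : Composition j, ν ^ c.length * μ ^ (j - c.length)) * ∏ i, ‖f i‖ := by
        rw [sum_mul]
        exact sum_fiberwise_of_maps_to
          (fun c _ => mem_Icc.2 ⟨c.length_pos_of_pos hj, c.length_le⟩) _
    _ = ν * (μ + ν) ^ (j - 1) * ∏ i, ‖f i‖ := by
        rw [Composition.sum_pow_length_mul_pow hj, add_comm ν]

/-- Let `X` be a real Banach space and `Y` a commutative Banach
algebra over `ℝ`.  Let `μ, ν ≥ 0` and for each `j ≥ 1` let
`Ǩ_j : X^j → Y` be a continuous multilinear map with `‖Ǩ_j‖ ≤ ν μ^{j-1}`.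
Define `J_j(f₁,…,f_j) = Σ_{m=1}^{j} (1/m) Σ_{i₁+⋯+i_m=j, i_k ≥ 1}
Ǩ_{i₁}(f₁,…,f_{i₁}) ⋯ Ǩ_{i_m}(f_{j-i_m+1},…,f_j)` (the inner sum over
compositions of `j` of length `m`, the product taken in `Y`).  Then
`‖J_j‖ ≤ ν (μ + ν)^{j-1}` for every `j ≥ 1`. -/
theorem stmt5 {X Y : Type*}
    [NormedAddCommGroup X] [NormedSpace ℝ X] [CompleteSpace X]
    [NormedCommRing Y] [NormedAlgebra ℝ Y] [CompleteSpace Y]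
    (μ ν : ℝ) (hμ : 0 ≤ μ) (hν : 0 ≤ ν)
    (K : ∀ j : ℕ, ContinuousMultilinearMap ℝ (fun _ : Fin j => X) Y)
    (hK : ∀ j : ℕ, 1 ≤ j → ‖K j‖ ≤ ν * μ ^ (j - 1))
    (J : ∀ j : ℕ, ContinuousMultilinearMap ℝ (fun _ : Fin j => X) Y)
    (hJ : ∀ (j : ℕ) (f : Fin j → X), J j f =
      ∑ m ∈ Finset.Icc 1 j, (m : ℝ)⁻¹ •
        ∑ c ∈ Finset.univ.filter (fun c : Composition j => c.length = m),
          ∏ k : Fin c.length, K (c.blocksFun k) (fun i => f (c.embedding k i)))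
    (j : ℕ) (hj : 1 ≤ j) :
    ‖J j‖ ≤ ν * (μ + ν) ^ (j - 1) :=
  stmt5_general μ ν hμ hν K hK J hJ j hj
end

section
/- If η ∈ X satisfies ‖η‖ < (μ + ν)^{−1}, then the Rytov series Σ_{j=1}^{∞} J_j(η, …, η) converges absolutely in Y, i.e. Σ_{j=1}^{∞} ‖J_j(η,…,η)‖ ≤ ν (μ+ν)^{−1} Σ_{j=1}^{∞} ((μ+ν)‖η‖)^j < ∞. -/
lemma rytovSubsetSum (m : ℕ) (a b : ℝ) :
    ∑ s : Finset (Fin m), a ^ s.card * b ^ (m - s.card) = (a + b) ^ m := by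
  have := Fintype.prod_add (fun _ : Fin m => a) (fun _ : Fin m => b)
  simp only [Finset.prod_const, Finset.card_compl, Fintype.card_fin, Finset.card_univ] at this
  rw [← this]

lemma rytovEquivCard {n : ℕ} (hn : 1 ≤ n) (d : CompositionAsSet n) :
    d.length = (compositionAsSetEquiv n d).card + 1 := by
  have hφlt : ∀ i : Fin (n - 1), 1 + (i : ℕ) < n + 1 := fun i => by have := i.isLt; omega
  set φ : Fin (n - 1) → Fin (n + 1) := fun i => ⟨1 + (i : ℕ), hφlt i⟩ with hφ
  have hφinj : Function.Injective φ := by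
    intro i j h
    simp only [hφ, Fin.mk.injEq, add_right_inj] at h
    exact Fin.ext h
  have hmem : ∀ i : Fin (n - 1), i ∈ compositionAsSetEquiv n d ↔ φ i ∈ d.boundaries := by
    intro i
    simp [compositionAsSetEquiv, hφ]
  have hset : d.boundaries =
      insert 0 (insert (Fin.last n) ((compositionAsSetEquiv n d).image φ)) := by
    ext b
    simp only [Finset.mem_insert, Finset.mem_image]
    constructor
    · intro hb
      by_cases h0 : b = 0
      · exact Or.inl h0
      by_cases hl : b = Fin.last n
      · exact Or.inr (Or.inl hl)
      refine Or.inr (Or.inr ?_)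
      have hb1 : 1 ≤ (b : ℕ) := by
        rcases Nat.eq_zero_or_pos (b : ℕ) with h | h
        · exact absurd (Fin.ext h) h0
        · exact h
      have hbn : (b : ℕ) ≠ n := fun h => hl (Fin.ext h)
      have hbu : (b : ℕ) < n + 1 := b.isLt
      refine ⟨⟨(b : ℕ) - 1, by omega⟩, ?_, ?_⟩
      · rw [hmem]
        convert hb using 1
        apply Fin.ext
        simp [hφ]; omega
      · apply Fin.ext
        simp [hφ]; omega
    · rintro (rfl | rfl | ⟨i, hi, rfl⟩)
      · exact d.zero_mem
      · exact d.getLast_mem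
      · exact (hmem i).1 hi
  have h0notin : (0 : Fin (n + 1)) ∉
      insert (Fin.last n) ((compositionAsSetEquiv n d).image φ) := by
    simp only [Finset.mem_insert, Finset.mem_image, not_or, not_exists]
    constructor
    · intro h
      have := congrArg Fin.val h
      simp [Fin.last] at this
      omega
    · rintro i ⟨_, h⟩
      have := congrArg Fin.val h
      simp [hφ] at this
  have hlnotin : Fin.last n ∉ (compositionAsSetEquiv n d).image φ := by
    simp only [Finset.mem_image, not_exists]
    rintro i ⟨_, h⟩
    have := congrArg Fin.val h
    have hi := i.isLt
    simp [hφ, Fin.last] at this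
    omega
  have hcard : d.boundaries.card = (compositionAsSetEquiv n d).card + 2 := by
    rw [hset, Finset.card_insert_of_notMem h0notin, Finset.card_insert_of_notMem hlnotin,
      Finset.card_image_of_injective _ hφinj]
  have := d.card_boundaries_eq_succ_length
  omega

lemma rytovCompSum {j : ℕ} (hj : 1 ≤ j) (μ ν : ℝ) :
    ∑ c : Composition j, ν ^ c.length * μ ^ (j - c.length) = ν * (ν + μ) ^ (j - 1) := by
  rw [Fintype.sum_equiv (compositionEquiv j) _
      (fun d : CompositionAsSet j => ν ^ d.length * μ ^ (j - d.length))
      (fun c => by simp only [compositionEquiv, Equiv.coe_fn_mk,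
        c.toCompositionAsSet_length])]
  rw [Fintype.sum_equiv (compositionAsSetEquiv j) _
      (fun s : Finset (Fin (j - 1)) => ν ^ (s.card + 1) * μ ^ (j - (s.card + 1)))
      (fun d => by rw [rytovEquivCard hj d])]
  have : ∀ s : Finset (Fin (j - 1)),
      ν ^ (s.card + 1) * μ ^ (j - (s.card + 1)) =
        ν * (ν ^ s.card * μ ^ (j - 1 - s.card)) := by
    intro s
    rw [pow_succ']
    ring_nf
    congr 2
    omega
  rw [Finset.sum_congr rfl (fun s _ => this s), ← Finset.mul_sum, rytovSubsetSum]

section Main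
variable {X Y : Type*}
    [NormedAddCommGroup X] [NormedSpace ℝ X] [CompleteSpace X]
    [NormedCommRing Y] [NormedAlgebra ℝ Y] [CompleteSpace Y]
    (μ ν : ℝ) (hμ : 0 ≤ μ) (hν : 0 ≤ ν)
    (K : ∀ j : ℕ, ContinuousMultilinearMap ℝ (fun _ : Fin j => X) Y)
    (hK : ∀ j : ℕ, 1 ≤ j → ‖K j‖ ≤ ν * μ ^ (j - 1))
    (J : ∀ j : ℕ, ContinuousMultilinearMap ℝ (fun _ : Fin j => X) Y)
    (hJ : ∀ (j : ℕ) (f : Fin j → X), J j f =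
      ∑ m ∈ Finset.Icc 1 j, (m : ℝ)⁻¹ •
        ∑ c ∈ Finset.univ.filter (fun c : Composition j => c.length = m),
          ∏ k : Fin c.length, K (c.blocksFun k) (fun i => f (c.embedding k i)))
    (η : X)

set_option linter.unusedSectionVars false in
include hμ hν hK hJ in
lemma rytovTermBound {j : ℕ} (hj : 1 ≤ j) :
    ‖J j (fun _ => η)‖ ≤ ν * (μ + ν) ^ (j - 1) * ‖η‖ ^ j := by
  have hjpos : 0 < j := hj
  have key : ∀ c : Composition j,
      ‖∏ k : Fin c.length, K (c.blocksFun k) (fun _ => η)‖ ≤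
        ν ^ c.length * μ ^ (j - c.length) * ‖η‖ ^ j := by
    intro c
    have hlen : 0 < c.length := c.length_pos_of_pos hjpos
    haveI : Nonempty (Fin c.length) := Fin.pos_iff_nonempty.mp hlen
    calc ‖∏ k : Fin c.length, K (c.blocksFun k) (fun _ => η)‖
        ≤ ∏ k : Fin c.length, ‖K (c.blocksFun k) (fun _ => η)‖ :=
          Finset.norm_prod_le' Finset.univ Finset.univ_nonempty _
      _ ≤ ∏ k : Fin c.length,
            (ν * μ ^ (c.blocksFun k - 1) * ‖η‖ ^ (c.blocksFun k)) := by
          apply Finset.prod_le_prod (fun k _ => norm_nonneg _)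
          intro k _
          calc ‖K (c.blocksFun k) (fun _ => η)‖
              ≤ ‖K (c.blocksFun k)‖ * ∏ _i : Fin (c.blocksFun k), ‖η‖ :=
                (K (c.blocksFun k)).le_opNorm _
            _ = ‖K (c.blocksFun k)‖ * ‖η‖ ^ (c.blocksFun k) := by
                simp [Finset.prod_const]
            _ ≤ ν * μ ^ (c.blocksFun k - 1) * ‖η‖ ^ (c.blocksFun k) := by
                apply mul_le_mul_of_nonneg_right (hK _ (c.one_le_blocksFun k))
                positivity
      _ = ν ^ c.length * μ ^ (j - c.length) * ‖η‖ ^ j := by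
          rw [Finset.prod_mul_distrib, Finset.prod_mul_distrib]
          have hsum : ∑ k, c.blocksFun k = j := c.sum_blocksFun
          have hsum1 : ∑ k : Fin c.length, (c.blocksFun k - 1) = j - c.length := by
            have h1 : ∑ k : Fin c.length, (c.blocksFun k - 1) + ∑ _k : Fin c.length, 1
                = ∑ k, c.blocksFun k := by
              rw [← Finset.sum_add_distrib]
              exact Finset.sum_congr rfl fun k _ => by
                have := c.one_le_blocksFun k; omega
            simp only [Finset.sum_const, Finset.card_univ, Fintype.card_fin,
              smul_eq_mul, mul_one] at h1
            omega
          congr 1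
          · congr 1
            · simp [Finset.prod_const]
            · rw [Finset.prod_pow_eq_pow_sum, hsum1]
          · rw [Finset.prod_pow_eq_pow_sum, hsum]
  rw [hJ]
  calc ‖∑ m ∈ Finset.Icc 1 j, (m : ℝ)⁻¹ •
        ∑ c ∈ Finset.univ.filter (fun c : Composition j => c.length = m),
          ∏ k : Fin c.length, K (c.blocksFun k) (fun i => η)‖
      ≤ ∑ m ∈ Finset.Icc 1 j, ‖(m : ℝ)⁻¹ •
        ∑ c ∈ Finset.univ.filter (fun c : Composition j => c.length = m),
          ∏ k : Fin c.length, K (c.blocksFun k) (fun i => η)‖ := norm_sum_le _ _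
    _ ≤ ∑ m ∈ Finset.Icc 1 j,
        ∑ c ∈ Finset.univ.filter (fun c : Composition j => c.length = m),
          ν ^ c.length * μ ^ (j - c.length) * ‖η‖ ^ j := by
        apply Finset.sum_le_sum
        intro m hm
        rw [norm_smul]
        have hm1 : 1 ≤ m := (Finset.mem_Icc.mp hm).1
        have hinv : ‖(m : ℝ)⁻¹‖ ≤ 1 := by
          rw [Real.norm_eq_abs, abs_of_nonneg (by positivity)]
          apply inv_le_one_of_one_le₀
          exact_mod_cast hm1
        calc ‖(m : ℝ)⁻¹‖ * ‖_‖ ≤ 1 * ‖∑ c ∈ Finset.univ.filter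
              (fun c : Composition j => c.length = m),
              ∏ k : Fin c.length, K (c.blocksFun k) (fun i => η)‖ :=
            mul_le_mul_of_nonneg_right hinv (norm_nonneg _)
          _ = _ := one_mul _
          _ ≤ ∑ c ∈ Finset.univ.filter (fun c : Composition j => c.length = m),
              ‖∏ k : Fin c.length, K (c.blocksFun k) (fun _ => η)‖ := norm_sum_le _ _
          _ ≤ _ := Finset.sum_le_sum fun c _ => key c
    _ = ∑ c : Composition j, ν ^ c.length * μ ^ (j - c.length) * ‖η‖ ^ j := by
        apply Finset.sum_fiberwise_of_maps_to
        intro c _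
        rw [Finset.mem_Icc]
        exact ⟨c.length_pos_of_pos hjpos, c.length_le⟩
    _ = ν * (μ + ν) ^ (j - 1) * ‖η‖ ^ j := by
        rw [← Finset.sum_mul, rytovCompSum hj, add_comm ν μ]
end Main


/-- With `X`, `Y`, `Ǩ_j`, `J_j`, `μ`, `ν` as in the Rytov series
setup (so `‖Ǩ_j‖ ≤ ν μ^{j-1}` and `J_j` is built from the `Ǩ`'s along
compositions), if `η ∈ X` satisfies `‖η‖ < (μ + ν)⁻¹`, then the Rytov series
`Σ_{j=1}^{∞} J_j(η,…,η)` converges absolutely in `Y`: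
`Σ_{j=1}^{∞} ‖J_j(η,…,η)‖ ≤ ν (μ+ν)⁻¹ Σ_{j=1}^{∞} ((μ+ν)‖η‖)^j < ∞`. -/
theorem stmt6 {X Y : Type*}
    [NormedAddCommGroup X] [NormedSpace ℝ X] [CompleteSpace X]
    [NormedCommRing Y] [NormedAlgebra ℝ Y] [CompleteSpace Y]
    (μ ν : ℝ) (hμ : 0 ≤ μ) (hν : 0 ≤ ν)
    (K : ∀ j : ℕ, ContinuousMultilinearMap ℝ (fun _ : Fin j => X) Y)
    (hK : ∀ j : ℕ, 1 ≤ j → ‖K j‖ ≤ ν * μ ^ (j - 1))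
    (J : ∀ j : ℕ, ContinuousMultilinearMap ℝ (fun _ : Fin j => X) Y)
    (hJ : ∀ (j : ℕ) (f : Fin j → X), J j f =
      ∑ m ∈ Finset.Icc 1 j, (m : ℝ)⁻¹ •
        ∑ c ∈ Finset.univ.filter (fun c : Composition j => c.length = m),
          ∏ k : Fin c.length, K (c.blocksFun k) (fun i => f (c.embedding k i)))
    (η : X) (hη : ‖η‖ < (μ + ν)⁻¹) :
    Summable (fun j : ℕ => ‖J (j + 1) (fun _ => η)‖) ∧
    Summable (fun j : ℕ => ((μ + ν) * ‖η‖) ^ (j + 1)) ∧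
    ∑' j : ℕ, ‖J (j + 1) (fun _ => η)‖ ≤
      ν * (μ + ν)⁻¹ * ∑' j : ℕ, ((μ + ν) * ‖η‖) ^ (j + 1) := by
  have hpos : 0 < μ + ν := by
    have : (0 : ℝ) < (μ + ν)⁻¹ := lt_of_le_of_lt (norm_nonneg η) hη
    exact inv_pos.mp this
  set r : ℝ := (μ + ν) * ‖η‖ with hr
  have hr0 : 0 ≤ r := mul_nonneg hpos.le (norm_nonneg η)
  have hr1 : r < 1 := by
    calc r < (μ + ν) * (μ + ν)⁻¹ := mul_lt_mul_of_pos_left hη hpos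
      _ = 1 := mul_inv_cancel₀ hpos.ne'
  have hgeo : Summable (fun j : ℕ => r ^ (j + 1)) := by
    apply Summable.congr ((summable_geometric_of_lt_one hr0 hr1).mul_left r)
    intro j
    rw [pow_succ']
  have hbound : ∀ j : ℕ, ‖J (j + 1) (fun _ => η)‖ ≤ ν * (μ + ν)⁻¹ * r ^ (j + 1) := by
    intro j
    have h1 := rytovTermBound μ ν hμ hν K hK J hJ η (Nat.le_add_left 1 j)
    simp only [Nat.add_sub_cancel] at h1
    have h2 : ν * (μ + ν)⁻¹ * r ^ (j + 1) = ν * (μ + ν) ^ j * ‖η‖ ^ (j + 1) := by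
      rw [hr, mul_pow, pow_succ']
      field_simp
    rw [h2]
    exact h1
  have hsum1 : Summable (fun j : ℕ => ‖J (j + 1) (fun _ => η)‖) :=
    Summable.of_nonneg_of_le (fun _ => norm_nonneg _) hbound
      (hgeo.mul_left (ν * (μ + ν)⁻¹))
  refine ⟨hsum1, hgeo, ?_⟩
  calc ∑' j : ℕ, ‖J (j + 1) (fun _ => η)‖
      ≤ ∑' j : ℕ, ν * (μ + ν)⁻¹ * r ^ (j + 1) :=
        Summable.tsum_le_tsum hbound hsum1 (hgeo.mul_left _)
    _ = ν * (μ + ν)⁻¹ * ∑' j : ℕ, r ^ (j + 1) := tsum_mul_left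
end
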